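/- Let (G, p) be an isostatic framework in ℝ³ with |V| ≥ 3. Then |E| = 3·|V| − 6. -/

import Mathlib

/-!
The equilibrium loads are the kernel of the resultant map `f ↦ (∑ f i, ∑ p i ⨯₃ f i)` into
`ℝ³ × ℝ³`, and an isostatic framework has exactly as many edges as this kernel has dimensions.
The resultant is onto as soon as the points `p i` are not collinear: loads at single vertices
produce every resultant force, differences of them produce the moments `(p i - p j) ⨯₃ v`,
and for two independent directions `d₁, d₂` the moments `d₁ ⨯₃ v`, `d₂ ⨯₃ v` span `ℝ³`.
Collinear points are excluded by isostaticity: with at least three vertices they carry an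
affine dependence `w`, and then every `i ↦ w i • v` is an equilibrium load, while the bar
loads, and hence everything they span, point along the line.
-/

open Matrix

/-- The space of equilibrium loads on a finite configuration `p : V → ℝ³`:
loads `f` with `∑ f i = 0` and `∑ (p i) ×₃ (f i) = 0`. -/
def eqLoads (V : Type*) [Fintype V] (p : V → Fin 3 → ℝ) :
    Submodule ℝ (V → Fin 3 → ℝ) where
  carrier := {f | (∑ i, f i) = 0 ∧ (∑ i, (p i) ⨯₃ (f i)) = 0}
  zero_mem' := by simp
  add_mem' := by
    rintro f g ⟨hf1, hf2⟩ ⟨hg1, hg2⟩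
    constructor
    · simp only [Pi.add_apply, Finset.sum_add_distrib, hf1, hg1, add_zero]
    · simp only [Pi.add_apply, map_add, Finset.sum_add_distrib, hf2, hg2, add_zero]
  smul_mem' := by
    rintro c f ⟨hf1, hf2⟩
    constructor
    · simp only [Pi.smul_apply, ← Finset.smul_sum, hf1, smul_zero]
    · simp only [Pi.smul_apply, _root_.map_smul, ← Finset.smul_sum, hf2, smul_zero]

/-- The bar load of the edge `{i, j}`: value `p i − p j` at `i`, `p j − p i` at `j`, and `0`
elsewhere. -/
def barLoad {V : Type*} [DecidableEq V] (p : V → Fin 3 → ℝ) : Sym2 V → (V → Fin 3 → ℝ) :=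
  Sym2.lift ⟨fun i j k => if k = i then p i - p j else if k = j then p j - p i else 0,
    by
      intro i j
      funext k
      by_cases hi : k = i <;> by_cases hj : k = j <;> simp_all⟩

/-- A framework with edge set `E` is isostatic when the family of its bar loads is
linearly independent and spans the space of equilibrium loads. -/
def IsIsostatic {V : Type*} [Fintype V] [DecidableEq V]
    (E : Finset (Sym2 V)) (p : V → Fin 3 → ℝ) : Prop :=
  LinearIndependent ℝ (fun e : E => barLoad p (e : Sym2 V)) ∧
  Submodule.span ℝ (barLoad p '' (E : Set (Sym2 V))) = eqLoads V p

theorem Submodule.eq_top_of_cross_mem {R : Type*} [Field R] [LinearOrder R]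
    [IsStrictOrderedRing R] {U : Submodule R (Fin 3 → R)} {d₁ d₂ : Fin 3 → R}
    (hd : d₁ ⨯₃ d₂ ≠ 0) (h₁ : ∀ v, d₁ ⨯₃ v ∈ U) (h₂ : ∀ v, d₂ ⨯₃ v ∈ U) : U = ⊤ := by
  set n := d₁ ⨯₃ d₂
  have hn : ∀ v, n ⨯₃ v ∈ U := fun v => by
    rw [cross_cross]
    exact U.sub_mem (h₁ _) (h₂ _)
  have hnn : n ⬝ᵥ n ≠ 0 := by rwa [Ne, dotProduct_self_eq_zero]
  refine U.eq_top_iff'.mpr fun c => (U.smul_mem_iff hnn).mp ?_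
  have hc : (n ⬝ᵥ n) • c = (n ⬝ᵥ c) • n - n ⨯₃ (n ⨯₃ c) := by
    rw [cross_cross_eq_smul_sub_smul', sub_sub_cancel]
  rw [hc]
  exact U.sub_mem (U.smul_mem _ (h₁ d₂)) (hn _)

theorem Submodule.eq_top_of_cross_mem_of_one_lt_finrank {R : Type*} [Field R] [LinearOrder R]
    [IsStrictOrderedRing R] {U D : Submodule R (Fin 3 → R)} (hD : 1 < Module.finrank R D)
    (hU : ∀ d ∈ D, ∀ v, d ⨯₃ v ∈ U) : U = ⊤ := by
  obtain ⟨x, hx⟩ := Module.finrank_pos_iff_exists_ne_zero.mp (zero_lt_one.trans hD)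
  obtain ⟨y, hxy⟩ := exists_linearIndependent_pair_of_one_lt_finrank hD hx
  have hxy' : LinearIndependent R ![(x : Fin 3 → R), y] := by
    rw [LinearIndependent.pair_iff] at hxy ⊢
    exact fun s t hst => hxy s t (Subtype.ext hst)
  exact eq_top_of_cross_mem (crossProduct_ne_zero_iff_linearIndependent.mpr hxy')
    (hU x x.2) (hU y y.2)

section Framework

variable {V : Type*}

theorem barLoad_mem_pi_vectorSpan [DecidableEq V] (p : V → Fin 3 → ℝ) (e : Sym2 V) :
    barLoad p e ∈ Submodule.pi Set.univ fun _ => vectorSpan ℝ (Set.range p) := by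
  induction e using Sym2.ind with
  | _ i j =>
    intro k _
    simp only [barLoad, Sym2.lift_mk]
    split_ifs
    · exact vsub_mem_vectorSpan ℝ (Set.mem_range_self i) (Set.mem_range_self j)
    · exact vsub_mem_vectorSpan ℝ (Set.mem_range_self j) (Set.mem_range_self i)
    · exact zero_mem _

variable [Fintype V]

def resultant (p : V → Fin 3 → ℝ) : (V → Fin 3 → ℝ) →ₗ[ℝ] (Fin 3 → ℝ) × (Fin 3 → ℝ) :=
  (∑ i, LinearMap.proj i).prod (∑ i, crossProduct (p i) ∘ₗ LinearMap.proj i)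

@[simp]
theorem resultant_apply (p : V → Fin 3 → ℝ) (f : V → Fin 3 → ℝ) :
    resultant p f = (∑ i, f i, ∑ i, p i ⨯₃ f i) := by
  simp [resultant]

theorem eqLoads_eq_ker_resultant (p : V → Fin 3 → ℝ) :
    eqLoads V p = LinearMap.ker (resultant p) := by
  ext f
  rw [LinearMap.mem_ker, resultant_apply, Prod.mk_eq_zero]
  rfl

theorem resultant_single [DecidableEq V] (p : V → Fin 3 → ℝ) (i : V) (v : Fin 3 → ℝ) :
    resultant p (Pi.single i v) = (v, p i ⨯₃ v) := by
  simp [Pi.apply_single (fun j => crossProduct (p j)) (fun j => map_zero _)]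

theorem range_resultant_eq_top (p : V → Fin 3 → ℝ)
    (hp : 1 < Module.finrank ℝ (vectorSpan ℝ (Set.range p))) :
    LinearMap.range (resultant p) = ⊤ := by
  classical
  set R := LinearMap.range (resultant p)
  have hsingle : ∀ i v, (v, p i ⨯₃ v) ∈ R := fun i v => ⟨_, resultant_single p i v⟩
  have hmoment : R.comap (LinearMap.inr ℝ _ _) = ⊤ := by
    refine Submodule.eq_top_of_cross_mem_of_one_lt_finrank hp fun d hd v => ?_
    suffices vectorSpan ℝ (Set.range p) ≤ R.comap (LinearMap.inr ℝ _ _ ∘ₗ crossProduct.flip v) from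
      this hd
    rw [vectorSpan_def, Submodule.span_le]
    rintro _ ⟨_, ⟨i, rfl⟩, _, ⟨j, rfl⟩, rfl⟩
    refine ⟨Pi.single i v - Pi.single j v, ?_⟩
    rw [map_sub, resultant_single, resultant_single]
    simp
  refine R.eq_top_iff'.mpr fun ⟨a, b⟩ => ?_
  obtain ⟨i⟩ : Nonempty V := by
    by_contra hempty
    rw [not_nonempty_iff] at hempty
    rw [Set.range_eq_empty p, vectorSpan_empty, finrank_bot] at hp
    omega
  have hb : b - p i ⨯₃ a ∈ R.comap (LinearMap.inr ℝ _ _) := hmoment ▸ Submodule.mem_top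
  simpa using R.add_mem (hsingle i a) hb

theorem finrank_eqLoads (p : V → Fin 3 → ℝ)
    (hp : 1 < Module.finrank ℝ (vectorSpan ℝ (Set.range p))) :
    Module.finrank ℝ (eqLoads V p) = 3 * Fintype.card V - 6 := by
  have h := LinearMap.finrank_range_add_finrank_ker (resultant p)
  rw [range_resultant_eq_top p hp, ← eqLoads_eq_ker_resultant] at h
  rw [finrank_top, Module.finrank_prod, Module.finrank_fin_fun, Module.finrank_pi_fintype,
    Finset.sum_const, Module.finrank_fin_fun, smul_eq_mul, Finset.card_univ] at h
  omega

theorem smul_mem_eqLoads {p : V → Fin 3 → ℝ} {w : V → ℝ} (hw : ∑ i, w i = 0)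
    (hwp : ∑ i, w i • p i = 0) (v : Fin 3 → ℝ) : (fun i => w i • v) ∈ eqLoads V p := by
  refine ⟨by rw [← Finset.sum_smul, hw, zero_smul], ?_⟩
  calc ∑ i, p i ⨯₃ (w i • v) = (∑ i, w i • p i) ⨯₃ v := by
        simp [map_sum, LinearMap.sum_apply]
    _ = 0 := by rw [hwp, map_zero, LinearMap.zero_apply]

namespace IsIsostatic

variable [DecidableEq V] {E : Finset (Sym2 V)} {p : V → Fin 3 → ℝ}

theorem card_eq_finrank (h : IsIsostatic E p) : E.card = Module.finrank ℝ (eqLoads V p) := by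
  have hfin := finrank_span_eq_card h.1
  rw [Fintype.card_coe] at hfin
  rw [← h.2, Set.image_eq_range]
  exact hfin.symm

theorem vectorSpan_eq_top_of_not_affineIndependent (h : IsIsostatic E p)
    (hp : ¬AffineIndependent ℝ p) : vectorSpan ℝ (Set.range p) = ⊤ := by
  set D := vectorSpan ℝ (Set.range p)
  have hle : eqLoads V p ≤ Submodule.pi Set.univ fun _ => D := by
    rw [← h.2, Submodule.span_le]
    rintro _ ⟨e, -, rfl⟩
    exact barLoad_mem_pi_vectorSpan p e
  simp only [affineIndependent_iff_of_fintype, not_forall] at hp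
  obtain ⟨w, hw, hwp, i, hi⟩ := hp
  rw [Finset.univ.weightedVSub_eq_linear_combination hw] at hwp
  refine D.eq_top_iff'.mpr fun v => (D.smul_mem_iff hi).mp ?_
  exact hle (smul_mem_eqLoads hw hwp v) i (Set.mem_univ i)

theorem one_lt_finrank_vectorSpan (h : IsIsostatic E p) (hV : 3 ≤ Fintype.card V) :
    1 < Module.finrank ℝ (vectorSpan ℝ (Set.range p)) := by
  by_cases hp : AffineIndependent ℝ p
  · rw [hp.finrank_vectorSpan (n := Fintype.card V - 1) (by omega)]
    omega
  · rw [h.vectorSpan_eq_top_of_not_affineIndependent hp, finrank_top, Module.finrank_fin_fun]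
    norm_num

end IsIsostatic

end Framework

theorem isostatic_card_edges_general {V : Type*} [Fintype V] [DecidableEq V]
    (G : SimpleGraph V) [DecidableRel G.Adj] (p : V → Fin 3 → ℝ)
    (hV : 3 ≤ Fintype.card V)
    (hiso : IsIsostatic G.edgeFinset p) :
    G.edgeFinset.card = 3 * Fintype.card V - 6 := by
  rw [hiso.card_eq_finrank, finrank_eqLoads p (hiso.one_lt_finrank_vectorSpan hV)]

/-- An isostatic framework `(G, p)` in `ℝ³` with at least `3` vertices has
`|E| = 3·|V| − 6` edges. -/
theorem isostatic_card_edges {V : Type*} [Fintype V] [DecidableEq V]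
    (G : SimpleGraph V) [DecidableRel G.Adj] (p : V → Fin 3 → ℝ)
    (hframe : ∀ i j : V, G.Adj i j → p i ≠ p j)
    (hV : 3 ≤ Fintype.card V)
    (hiso : IsIsostatic G.edgeFinset p) :
    G.edgeFinset.card = 3 * Fintype.card V - 6 :=
  isostatic_card_edges_general G p hV hiso
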